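/- arXiv:2512.10461 — 5 statements merged into one kernel-verified Lean document; each statement's English description precedes it below -/
import Mathlib

section
/- Let a ∈ ℝⁿ be a nonzero vector, b ∈ ℝ, δ > 0, and let p ∈ ℝⁿ satisfy ⟨a, p⟩ ≤ b. Then for every z ∈ ℝⁿ, the SKM update z' = T_{a,b,δ}(z) satisfies the quantitative Fejér inequality ‖z' − p‖² ≤ ‖z − p‖² − δ(2 − δ)·(max(⟨a, z⟩ − b, 0))² / ‖a‖². -/
/-! Expanding the square, `‖x - t • a‖² = ‖x‖² - 2t⟪a, x⟫ + t²‖a‖²` with `x = z - p`.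
Since `p` lies in the half-space `⟪a, ·⟫ ≤ b`, the residual `m = max(⟪a, z⟫ - b, 0)` satisfies
`m² ≤ m⟪a, z - p⟫`, so for the step `t = δm/‖a‖²` with `δ ≥ 0` the cross term is at most
`-2δm²/‖a‖²`, while the quadratic term is `δ²m²/‖a‖²`. -/

open RealInnerProductSpace

section
variable {E : Type*} [NormedAddCommGroup E] [InnerProductSpace ℝ E]

theorem norm_sub_smul_sq_le_of_mul_le_mul_inner (x a : E) {t m : ℝ}
    (hm : t * m ≤ t * ⟪a, x⟫) :
    ‖x - t • a‖ ^ 2 ≤ ‖x‖ ^ 2 - 2 * t * m + t ^ 2 * ‖a‖ ^ 2 := by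
  rw [norm_sub_sq_real, real_inner_smul_right, real_inner_comm, norm_smul, mul_pow,
    Real.norm_eq_abs, sq_abs]
  linarith

theorem norm_sub_relaxed_step_sq_le (x a : E) {δ m : ℝ} (hδ : 0 ≤ δ)
    (hm : m ^ 2 ≤ m * ⟪a, x⟫) :
    ‖x - (δ * m / ‖a‖ ^ 2) • a‖ ^ 2 ≤ ‖x‖ ^ 2 - δ * (2 - δ) * m ^ 2 / ‖a‖ ^ 2 := by
  have hstep : δ * m / ‖a‖ ^ 2 * m ≤ δ * m / ‖a‖ ^ 2 * ⟪a, x⟫ := by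
    rw [div_mul_eq_mul_div, div_mul_eq_mul_div, mul_assoc, mul_assoc, ← sq]
    gcongr
  refine (norm_sub_smul_sq_le_of_mul_le_mul_inner x a hstep).trans_eq ?_
  rcases eq_or_ne ‖a‖ 0 with ha | ha
  · simp [ha]
  · field_simp
    ring

theorem max_sub_zero_sq_le_mul_inner_sub {a p : E} {b : ℝ} (hp : ⟪a, p⟫ ≤ b) (z : E) :
    max (⟪a, z⟫ - b) 0 ^ 2 ≤ max (⟪a, z⟫ - b) 0 * ⟪a, z - p⟫ := by
  rw [inner_sub_right]
  rcases le_total (⟪a, z⟫ - b) 0 with h | h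
  · simp [max_eq_right h]
  · rw [max_eq_left h, sq]
    gcongr

end

theorem skm_update_fejer_sq_general
    (n : ℕ) (a : EuclideanSpace ℝ (Fin n)) (b : ℝ)
    (δ : ℝ) (hδ : 0 < δ)
    (p : EuclideanSpace ℝ (Fin n)) (hp : (inner ℝ a p : ℝ) ≤ b)
    (z : EuclideanSpace ℝ (Fin n)) :
    ‖(z - (δ * max ((inner ℝ a z : ℝ) - b) 0 / ‖a‖ ^ 2) • a) - p‖ ^ 2 ≤
      ‖z - p‖ ^ 2 - δ * (2 - δ) * (max ((inner ℝ a z : ℝ) - b) 0) ^ 2 / ‖a‖ ^ 2 := by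
  rw [sub_right_comm]
  exact norm_sub_relaxed_step_sq_le (z - p) a hδ.le (max_sub_zero_sq_le_mul_inner_sub hp z)

/-- Quantitative Fejér inequality for the SKM update: if `⟪a,p⟫ ≤ b` then
`‖T_{a,b,δ}(z) − p‖² ≤ ‖z − p‖² − δ(2−δ)·(max(⟪a,z⟫ − b, 0))²/‖a‖²`. -/
theorem skm_update_fejer_sq
    (n : ℕ) (a : EuclideanSpace ℝ (Fin n)) (ha : a ≠ 0) (b : ℝ)
    (δ : ℝ) (hδ : 0 < δ)
    (p : EuclideanSpace ℝ (Fin n)) (hp : (inner ℝ a p : ℝ) ≤ b)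
    (z : EuclideanSpace ℝ (Fin n)) :
    ‖(z - (δ * max ((inner ℝ a z : ℝ) - b) 0 / ‖a‖ ^ 2) • a) - p‖ ^ 2 ≤
      ‖z - p‖ ^ 2 - δ * (2 - δ) * (max ((inner ℝ a z : ℝ) - b) 0) ^ 2 / ‖a‖ ^ 2 :=
  skm_update_fejer_sq_general n a b δ hδ p hp z
end

section
/- Let a ∈ ℝⁿ be a nonzero vector, b ∈ ℝ, and 0 < δ < 2, and let p ∈ ℝⁿ satisfy ⟨a, p⟩ ≤ b. Then for every z ∈ ℝⁿ, the SKM update does not increase the distance to p: ‖T_{a,b,δ}(z) − p‖ ≤ ‖z − p‖. -/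
/-!
With `t = δ (⟪a, z⟫ - b)⁺ / ‖a‖²` the update is `z - t • a`, and
`‖z - t • a - p‖² = ‖z - p‖² - t (2 ⟪a, z - p⟫ - t ‖a‖²)`. The step vanishes unless
`⟪a, z⟫ > b`, and then `t ‖a‖² = δ (⟪a, z⟫ - b) ≤ 2 (⟪a, z⟫ - ⟪a, p⟫)` because `δ ≤ 2`
and `⟪a, p⟫ ≤ b`.
-/

open scoped RealInnerProductSpace

section

variable {E : Type*} [NormedAddCommGroup E] [InnerProductSpace ℝ E]

theorem norm_sub_smul_le_of_mul_norm_sq_le {a x : E} {t : ℝ} (ht : 0 ≤ t)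
    (h : t * ‖a‖ ^ 2 ≤ 2 * ⟪a, x⟫) : ‖x - t • a‖ ≤ ‖x‖ := by
  refine (sq_le_sq₀ (norm_nonneg _) (norm_nonneg _)).1 ?_
  rw [norm_sub_sq_real, real_inner_smul_right, norm_smul, mul_pow, Real.norm_eq_abs, sq_abs,
    real_inner_comm]
  nlinarith [mul_le_mul_of_nonneg_left h ht]

noncomputable def skmUpdate (a : E) (b δ : ℝ) (z : E) : E :=
  z - (δ * max (⟪a, z⟫ - b) 0 / ‖a‖ ^ 2) • a

theorem norm_skmUpdate_sub_le {a p : E} {b δ : ℝ} (hδ0 : 0 ≤ δ) (hδ2 : δ ≤ 2)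
    (hp : ⟪a, p⟫ ≤ b) (z : E) : ‖skmUpdate a b δ z - p‖ ≤ ‖z - p‖ := by
  rcases le_or_gt ⟪a, z⟫ b with hzb | hzb
  · simp [skmUpdate, max_eq_right (sub_nonpos.2 hzb)]
  have ha : a ≠ 0 := by
    rintro rfl
    simp only [inner_zero_left] at hp hzb
    linarith
  have hviol : 0 ≤ ⟪a, z⟫ - b := sub_nonneg.2 hzb.le
  rw [skmUpdate, sub_right_comm, max_eq_left hviol]
  refine norm_sub_smul_le_of_mul_norm_sq_le (by positivity) ?_
  rw [div_mul_cancel₀ _ (by positivity), inner_sub_right]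
  nlinarith [mul_le_mul_of_nonneg_right hδ2 hviol]

end

theorem skm_update_nonexpansive_toward_feasible_general
    (n : ℕ) (a : EuclideanSpace ℝ (Fin n)) (b : ℝ)
    (δ : ℝ) (hδ0 : 0 < δ) (hδ2 : δ < 2)
    (p : EuclideanSpace ℝ (Fin n)) (hp : (inner ℝ a p : ℝ) ≤ b)
    (z : EuclideanSpace ℝ (Fin n)) :
    ‖(z - (δ * max ((inner ℝ a z : ℝ) - b) 0 / ‖a‖ ^ 2) • a) - p‖ ≤ ‖z - p‖ :=
  norm_skmUpdate_sub_le hδ0.le hδ2.le hp z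

/-- For `0 < δ < 2` and any point `p` with `⟪a,p⟫ ≤ b`, the SKM update does not
increase the distance to `p`: `‖T_{a,b,δ}(z) − p‖ ≤ ‖z − p‖`. -/
theorem skm_update_nonexpansive_toward_feasible
    (n : ℕ) (a : EuclideanSpace ℝ (Fin n)) (ha : a ≠ 0) (b : ℝ)
    (δ : ℝ) (hδ0 : 0 < δ) (hδ2 : δ < 2)
    (p : EuclideanSpace ℝ (Fin n)) (hp : (inner ℝ a p : ℝ) ≤ b)
    (z : EuclideanSpace ℝ (Fin n)) :
    ‖(z - (δ * max ((inner ℝ a z : ℝ) - b) 0 / ‖a‖ ^ 2) • a) - p‖ ≤ ‖z - p‖ :=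
  skm_update_nonexpansive_toward_feasible_general n a b δ hδ0 hδ2 p hp z
end

section
/- (Theorem 1: SKM L2 projection approximation in expectation.) Let A be a p × n real matrix whose rows a₁ᵀ, …, a_pᵀ are all nonzero, let b ∈ ℝᵖ, and suppose the feasible set P = {z ∈ ℝⁿ : Az ≤ b} is nonempty. Let 0 < δ < 2 and z₀ ∈ ℝⁿ. Let μ be any probability mass function on the finite set of index sequences ω = (i₀, …, i_{k−1}) ∈ {1, …, p}^k, and for each ω let z_k(ω) denote the k-th SKM iterate from z₀ along ω. Then the expected distance satisfies 𝔼_{ω∼μ}[‖z_k(ω) − z₀‖] = Σ_ω μ(ω)·‖z_k(ω) − z₀‖ ≤ 2 · infDist(z₀, P). -/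
open Metric

/-- The SKM update `T_{a,b,δ}(z) = z − δ·max(⟪a,z⟫ − b, 0)/‖a‖² • a`. -/
noncomputable def skmT {n : ℕ} (a : EuclideanSpace ℝ (Fin n)) (b δ : ℝ)
    (z : EuclideanSpace ℝ (Fin n)) : EuclideanSpace ℝ (Fin n) :=
  z - (δ * max ((inner ℝ a z : ℝ) - b) 0 / ‖a‖ ^ 2) • a

/-- The `i`-th row of a matrix, viewed as a vector of Euclidean space. -/
noncomputable def Matrix.rowEuc {p n : ℕ} (A : Matrix (Fin p) (Fin n) ℝ) (i : Fin p) :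
    EuclideanSpace ℝ (Fin n) := (WithLp.equiv 2 _).symm (A i)

/-!
Each SKM step is a relaxed projection onto a half-space containing `P`, hence does not increase
the distance to any point of `P`. So `‖z_k - w‖ ≤ ‖z₀ - w‖` for every `w ∈ P` and every index
sequence, and the triangle inequality through `w` gives `‖z_k - z₀‖ ≤ 2 ‖z₀ - w‖`. Taking the
infimum over `w ∈ P` bounds every `‖z_k(ω) - z₀‖`, hence also their average under `μ`.
-/

section Fejer

variable {E : Type*} [NormedAddCommGroup E] [InnerProductSpace ℝ E]

theorem norm_sub_smul_le_norm {x a : E} {t : ℝ}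
    (h : t ^ 2 * ‖a‖ ^ 2 ≤ 2 * t * inner ℝ a x) : ‖x - t • a‖ ≤ ‖x‖ := by
  have hsq : ‖x - t • a‖ ^ 2 = ‖x‖ ^ 2 - (2 * t * inner ℝ a x - t ^ 2 * ‖a‖ ^ 2) := by
    rw [norm_sub_sq_real, real_inner_smul_right, real_inner_comm, norm_smul, mul_pow,
      Real.norm_eq_abs, sq_abs]
    ring
  exact pow_le_pow_iff_left₀ (norm_nonneg _) (norm_nonneg _) two_ne_zero |>.mp (by linarith)

theorem norm_relaxedProj_sub_le {a z w : E} {b δ : ℝ} (hδ0 : 0 ≤ δ) (hδ2 : δ ≤ 2)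
    (hw : inner ℝ a w ≤ b) :
    ‖z - (δ * max (inner ℝ a z - b) 0 / ‖a‖ ^ 2) • a - w‖ ≤ ‖z - w‖ := by
  set m := max (inner ℝ a z - b) 0
  set c := δ / ‖a‖ ^ 2
  have hc : 0 ≤ c := by positivity
  have hca : c * ‖a‖ ^ 2 ≤ 2 := by
    rcases eq_or_ne ‖a‖ 0 with ha | ha
    · simp [ha]
    · rwa [div_mul_cancel₀ _ (pow_ne_zero 2 ha)]
  have hm : m * m ≤ m * inner ℝ a (z - w) := by
    rw [inner_sub_right]
    rcases le_total (inner ℝ a z - b) 0 with hx | hx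
    · simp [m, max_eq_right hx]
    · have : m = inner ℝ a z - b := max_eq_left hx
      nlinarith
  have hstep : z - (δ * m / ‖a‖ ^ 2) • a - w = (z - w) - (c * m) • a := by
    rw [mul_div_right_comm]
    abel
  rw [hstep]
  apply norm_sub_smul_le_norm
  have hm0 : 0 ≤ m := le_max_right _ _
  calc (c * m) ^ 2 * ‖a‖ ^ 2 = c * (c * ‖a‖ ^ 2) * (m * m) := by ring
    _ ≤ c * 2 * (m * m) := by gcongr
    _ ≤ c * 2 * (m * inner ℝ a (z - w)) := by gcongr
    _ = 2 * (c * m) * inner ℝ a (z - w) := by ring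

end Fejer

theorem dist_le_dist_zero_of_dist_succ_le {X : Type*} [PseudoMetricSpace X] {x : ℕ → X} {w : X}
    {k : ℕ} (h : ∀ j < k, dist (x (j + 1)) w ≤ dist (x j) w) :
    dist (x k) w ≤ dist (x 0) w := by
  induction k with
  | zero => rfl
  | succ k ih =>
    exact (h k k.lt_succ_self).trans (ih fun j hj => h j (hj.trans k.lt_succ_self))

theorem dist_le_two_mul_infDist {X : Type*} [PseudoMetricSpace X] {x x₀ : X} {s : Set X}
    (hs : s.Nonempty) (h : ∀ w ∈ s, dist x w ≤ dist x₀ w) :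
    dist x x₀ ≤ 2 * infDist x₀ s := by
  have : dist x x₀ / 2 ≤ infDist x₀ s := by
    refine (le_infDist hs).mpr fun w hw => ?_
    linarith [dist_triangle_right x x₀ w, h w hw]
  linarith

theorem Matrix.inner_rowEuc {p n : ℕ} (A : Matrix (Fin p) (Fin n) ℝ) (i : Fin p)
    (w : EuclideanSpace ℝ (Fin n)) : inner ℝ (A.rowEuc i) w = A.mulVec w i := by
  simp [Matrix.rowEuc, Matrix.mulVec, dotProduct, PiLp.inner_apply, mul_comm]

theorem skm_expected_l2_approx_general
    (p n k : ℕ) (A : Matrix (Fin p) (Fin n) ℝ) (b : Fin p → ℝ)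
    (hfeas : {w : EuclideanSpace ℝ (Fin n) | ∀ i, A.mulVec w i ≤ b i}.Nonempty)
    (δ : ℝ) (hδ0 : 0 < δ) (hδ2 : δ < 2)
    (z₀ : EuclideanSpace ℝ (Fin n))
    (μ : (Fin k → Fin p) → ℝ) (hμ0 : ∀ ω, 0 ≤ μ ω) (hμ1 : ∑ ω, μ ω = 1)
    (z : (Fin k → Fin p) → ℕ → EuclideanSpace ℝ (Fin n))
    (hz0 : ∀ ω, z ω 0 = z₀)
    (hstep : ∀ ω, ∀ j : Fin k,
      z ω (j.1 + 1) = skmT (A.rowEuc (ω j)) (b (ω j)) δ (z ω j.1)) :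
    ∑ ω, μ ω * ‖z ω k - z₀‖ ≤
      2 * infDist z₀ {w : EuclideanSpace ℝ (Fin n) | ∀ i, A.mulVec w i ≤ b i} := by
  set P := {w : EuclideanSpace ℝ (Fin n) | ∀ i, A.mulVec w i ≤ b i}
  have hfejer : ∀ ω, ∀ w ∈ P, dist (z ω k) w ≤ dist z₀ w := fun ω w hw => by
    rw [← hz0 ω]
    refine dist_le_dist_zero_of_dist_succ_le fun j hj => ?_
    simp only [hstep ω ⟨j, hj⟩, skmT, dist_eq_norm]
    exact norm_relaxedProj_sub_le hδ0.le hδ2.le ((A.inner_rowEuc _ w).trans_le (hw _))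
  calc ∑ ω, μ ω * ‖z ω k - z₀‖ ≤ ∑ ω, μ ω * (2 * infDist z₀ P) := by
        gcongr with ω
        · exact hμ0 ω
        · exact dist_eq_norm (z ω k) z₀ ▸ dist_le_two_mul_infDist hfeas (hfejer ω)
    _ = 2 * infDist z₀ P := by rw [← Finset.sum_mul, hμ1, one_mul]

/-- Theorem 1 (SKM L2 projection approximation in expectation): for any
probability mass function `μ` on the finite set of index sequences
`ω ∈ {1,…,p}^k`, the expected distance of the `k`-th SKM iterate to the initial
point is at most twice the distance from `z₀` to the feasible set
`P = {z : Az ≤ b}`. -/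
theorem skm_expected_l2_approx
    (p n k : ℕ) (A : Matrix (Fin p) (Fin n) ℝ) (b : Fin p → ℝ)
    (hrows : ∀ i, A.rowEuc i ≠ 0)
    (hfeas : {w : EuclideanSpace ℝ (Fin n) | ∀ i, A.mulVec w i ≤ b i}.Nonempty)
    (δ : ℝ) (hδ0 : 0 < δ) (hδ2 : δ < 2)
    (z₀ : EuclideanSpace ℝ (Fin n))
    (μ : (Fin k → Fin p) → ℝ) (hμ0 : ∀ ω, 0 ≤ μ ω) (hμ1 : ∑ ω, μ ω = 1)
    (z : (Fin k → Fin p) → ℕ → EuclideanSpace ℝ (Fin n))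
    (hz0 : ∀ ω, z ω 0 = z₀)
    (hstep : ∀ ω, ∀ j : Fin k,
      z ω (j.1 + 1) = skmT (A.rowEuc (ω j)) (b (ω j)) δ (z ω j.1)) :
    ∑ ω, μ ω * ‖z ω k - z₀‖ ≤
      2 * infDist z₀ {w : EuclideanSpace ℝ (Fin n) | ∀ i, A.mulVec w i ≤ b i} :=
  skm_expected_l2_approx_general p n k A b hfeas δ hδ0 hδ2 z₀ μ hμ0 hμ1 z hz0 hstep
end

section
/- Let A be a p × n real matrix, b ∈ ℝᵖ, C a q × n real matrix, d ∈ ℝ^q, y₀ ∈ ℝⁿ, and suppose the feasible set F = {z ∈ ℝⁿ : Az ≤ b and Cz = d} is nonempty. Let z_proj be the orthogonal projection of y₀ onto {z : Cz = d}, and let N : ℝʳ → ℝⁿ be a linear isometry (‖Nw‖ = ‖w‖ for all w) whose range equals null(C). Let W = {w ∈ ℝʳ : (A∘N) w ≤ b − A·z_proj}. Then infDist(y₀, F)² = ‖y₀ − z_proj‖² + infDist(0, W)². -/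
/-!
Every feasible point is `zproj + N w` with `w ∈ W`. Minimality of `zproj` on the affine
subspace makes `y₀ - zproj` orthogonal to `range N = null(C)`, so by Pythagoras and since `N`
is an isometry, `dist(y₀, zproj + N w)² = ‖y₀ - zproj‖² + ‖w‖²`. Minimising over `w ∈ W`
gives the decomposition.
-/

open Matrix Metric

theorem real_inner_eq_zero_of_forall_norm_le_norm_sub {F : Type*} [NormedAddCommGroup F]
    [InnerProductSpace ℝ F] (K : Submodule ℝ F) {u : F} (h : ∀ k ∈ K, ‖u‖ ≤ ‖u - k‖) :
    ∀ k ∈ K, inner ℝ u k = 0 := by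
  have hmin : ‖u - 0‖ = ⨅ k : (K : Set F), ‖u - k‖ := by
    refine le_antisymm (le_ciInf fun k => by simpa using h k k.2) ?_
    refine ciInf_le ⟨0, ?_⟩ (⟨0, K.zero_mem⟩ : (K : Set F))
    rintro _ ⟨k, rfl⟩
    exact norm_nonneg _
  simpa using (K.norm_eq_iInf_iff_real_inner_eq_zero K.zero_mem).1 hmin

theorem sq_infDist_image_of_sq_dist_eq {α β : Type*} [PseudoMetricSpace α]
    [PseudoMetricSpace β] {f : β → α} {x : α} {y : β} {c : ℝ} {W : Set β} (hW : W.Nonempty)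
    (hf : ∀ w ∈ W, dist x (f w) ^ 2 = c ^ 2 + dist y w ^ 2) :
    infDist x (f '' W) ^ 2 = c ^ 2 + infDist y W ^ 2 := by
  apply le_antisymm
  · suffices √(infDist x (f '' W) ^ 2 - c ^ 2) ≤ infDist y W by
      linarith [(Real.sqrt_le_left infDist_nonneg).1 this]
    refine (le_infDist hW).2 fun w hw => (Real.sqrt_le_left dist_nonneg).2 ?_
    have := pow_le_pow_left₀ infDist_nonneg
      (infDist_le_dist_of_mem (x := x) (Set.mem_image_of_mem f hw)) 2
    linarith [hf w hw]
  · refine (Real.sqrt_le_left infDist_nonneg).1 ((le_infDist (hW.image f)).2 ?_)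
    rintro _ ⟨w, hw, rfl⟩
    refine (Real.sqrt_le_left dist_nonneg).2 ?_
    have := pow_le_pow_left₀ infDist_nonneg (infDist_le_dist_of_mem (x := y) hw) 2
    linarith [hf w hw]

theorem setOf_mulVec_le_and_mulVec_eq_eq_image {m k ι β : Type*} [Fintype ι]
    (A : Matrix m ι ℝ) (b : m → ℝ) (C : Matrix k ι ℝ) (d : k → ℝ) {z₀ : EuclideanSpace ℝ ι}
    (hz₀ : C *ᵥ z₀ = d) {N : β → EuclideanSpace ℝ ι}
    (hN : Set.range N = {v : EuclideanSpace ℝ ι | C *ᵥ v = 0}) :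
    {z : EuclideanSpace ℝ ι | (∀ i, (A *ᵥ z) i ≤ b i) ∧ C *ᵥ z = d} =
      (fun w => z₀ + N w) '' {w | ∀ i, (A *ᵥ N w) i ≤ b i - (A *ᵥ z₀) i} := by
  ext z
  constructor
  · rintro ⟨hA, hC⟩
    obtain ⟨w, hw⟩ : z - z₀ ∈ Set.range N := by
      rw [hN]
      simp [mulVec_sub, hC, hz₀]
    refine ⟨w, fun i => ?_, by simp [hw]⟩
    simp only [hw, WithLp.ofLp_sub, mulVec_sub, Pi.sub_apply]
    linarith [hA i]
  · rintro ⟨w, hw, rfl⟩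
    have hNw : C *ᵥ N w = 0 := hN.subset ⟨w, rfl⟩
    refine ⟨fun i => ?_, by simp [mulVec_add, hNw, hz₀]⟩
    simp only [WithLp.ofLp_add, mulVec_add, Pi.add_apply]
    linarith [hw i]

/-- Pythagorean decomposition of the distance to the mixed-constraint feasible
set: with `z_proj` the orthogonal projection of `y₀` onto `{z : Cz = d}` and
`N` a linear isometry whose range is the null space of `C`,
`infDist(y₀, F)² = ‖y₀ − z_proj‖² + infDist(0, W)²`, where
`W = {w : (A∘N) w ≤ b − A·z_proj}`. -/
theorem infDist_sq_decomposition_nullspace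
    (p q n r : ℕ) (A : Matrix (Fin p) (Fin n) ℝ) (b : Fin p → ℝ)
    (C : Matrix (Fin q) (Fin n) ℝ) (d : Fin q → ℝ)
    (y₀ : EuclideanSpace ℝ (Fin n))
    (F : Set (EuclideanSpace ℝ (Fin n)))
    (hF : F = {z : EuclideanSpace ℝ (Fin n) | (∀ i, A.mulVec z i ≤ b i) ∧ C.mulVec z = d})
    (hFne : F.Nonempty)
    (zproj : EuclideanSpace ℝ (Fin n)) (hzproj_mem : C.mulVec zproj = d)
    (hzproj_min : ∀ z : EuclideanSpace ℝ (Fin n), C.mulVec z = d →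
      ‖y₀ - zproj‖ ≤ ‖y₀ - z‖)
    (N : EuclideanSpace ℝ (Fin r) →ₗᵢ[ℝ] EuclideanSpace ℝ (Fin n))
    (hN : Set.range N = {v : EuclideanSpace ℝ (Fin n) | C.mulVec v = 0})
    (W : Set (EuclideanSpace ℝ (Fin r)))
    (hW : W = {w | ∀ i, A.mulVec (N w) i ≤ b i - A.mulVec zproj i}) :
    (infDist y₀ F) ^ 2 = ‖y₀ - zproj‖ ^ 2 + (infDist 0 W) ^ 2 := by
  have hFW : F = (fun w => zproj + N w) '' W := by
    rw [hF, hW, setOf_mulVec_le_and_mulVec_eq_eq_image A b C d hzproj_mem hN]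
  have horth : ∀ w, inner ℝ (y₀ - zproj) (N w) = 0 := by
    refine fun w => real_inner_eq_zero_of_forall_norm_le_norm_sub
      (LinearMap.range N.toLinearMap) (fun v hv => ?_) (N w) ⟨w, rfl⟩
    have hCv : C *ᵥ v = 0 := hN.subset hv
    simpa [sub_sub] using hzproj_min (zproj + v) (by simp [mulVec_add, hCv, hzproj_mem])
  obtain ⟨_, w₀, hw₀, -⟩ := hFW ▸ hFne
  rw [hFW]
  refine sq_infDist_image_of_sq_dist_eq ⟨w₀, hw₀⟩ fun w _ => ?_
  rw [dist_eq_norm, dist_zero_left, ← sub_sub, norm_sub_sq_real, horth, N.norm_map]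
  ring
end

section
/- (Differentiability of one SKM step away from ties and kinks.) Let A : ℝᵐ → ℝ^{p×n} and b : ℝᵐ → ℝᵖ be differentiable at x₀, with rows aᵢ(x)ᵀ of A(x), let S ⊆ {1, …, p} be a fixed sample set, let z : ℝᵐ → ℝⁿ be differentiable at x₀, and let δ > 0. Suppose there is i* ∈ S such that: (i) max(a_{i*}(x₀)ᵀz(x₀) − b_{i*}(x₀), 0) > max(aᵢ(x₀)ᵀz(x₀) − bᵢ(x₀), 0) for every i ∈ S with i ≠ i* (unique strict argmax), (ii) a_{i*}(x₀)ᵀz(x₀) − b_{i*}(x₀) > 0, and (iii) a_{i*}(x₀) ≠ 0. Then the one-step SKM map x ↦ z(x) − δ·max(a_{i(x)}(x)ᵀz(x) − b_{i(x)}(x), 0)/‖a_{i(x)}(x)‖² · a_{i(x)}(x), where i(x) ∈ S is any selection attaining the maximum violation max_{i∈S} max(aᵢ(x)ᵀz(x) − bᵢ(x), 0), is differentiable at x₀, and its derivative equals that of the smooth map x ↦ z(x) − δ·(a_{i*}(x)ᵀz(x) − b_{i*}(x))/‖a_{i*}(x)‖² · a_{i*}(x). -/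
/-! Near `x₀` every residual `⟪aᵢ(x), z(x)⟫ - bᵢ(x)` is continuous, so the strict gaps at `x₀`
persist: the selection is forced to be `i*` and the residual of `i*` stays positive. The SKM map
therefore coincides on a neighbourhood of `x₀` with the smooth map using the fixed row `i*`,
which is differentiable because `‖a_{i*}(x₀)‖² ≠ 0`. -/

open Filter Topology

theorem eventually_selection_eq_of_unique_max {X ι α : Type*} [TopologicalSpace X]
    [LinearOrder α] [TopologicalSpace α] [OrderClosedTopology α]
    {S : Finset ι} {g : ι → X → α} {x₀ : X} {i₀ : ι}
    (hg : ∀ i ∈ S, ContinuousAt (g i) x₀) (hi₀ : i₀ ∈ S)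
    (hstrict : ∀ i ∈ S, i ≠ i₀ → g i x₀ < g i₀ x₀)
    {sel : X → ι} (hsel_mem : ∀ x, sel x ∈ S) (hsel_max : ∀ x, g i₀ x ≤ g (sel x) x) :
    ∀ᶠ x in 𝓝 x₀, sel x = i₀ := by
  have hgap : ∀ᶠ x in 𝓝 x₀, ∀ i ∈ S, i ≠ i₀ → g i x < g i₀ x := by
    rw [eventually_all_finset]
    intro i hi
    rcases eq_or_ne i i₀ with rfl | hne
    · exact Eventually.of_forall fun _ h => (h rfl).elim
    · filter_upwards [(hg i hi).eventually_lt (hg i₀ hi₀) (hstrict i hi hne)] with x hx _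
        using hx
  filter_upwards [hgap] with x hx
  by_contra hne
  exact (hsel_max x).not_gt (hx _ (hsel_mem x) hne)

theorem skm_one_step_differentiable_at_general
    (m p n : ℕ)
    -- `a i x` is the `i`-th row of the constraint matrix `A(x)`
    (a : Fin p → EuclideanSpace ℝ (Fin m) → EuclideanSpace ℝ (Fin n))
    (b : Fin p → EuclideanSpace ℝ (Fin m) → ℝ)
    (x₀ : EuclideanSpace ℝ (Fin m))
    (ha : ∀ i, DifferentiableAt ℝ (a i) x₀)
    (hb : ∀ i, DifferentiableAt ℝ (b i) x₀)
    (S : Finset (Fin p))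
    (z : EuclideanSpace ℝ (Fin m) → EuclideanSpace ℝ (Fin n))
    (hz : DifferentiableAt ℝ z x₀)
    (δ : ℝ)
    (istar : Fin p) (histar : istar ∈ S)
    -- (i) unique strict argmax at `x₀`
    (hstrict : ∀ i ∈ S, i ≠ istar →
      max ((inner ℝ (a i x₀) (z x₀) : ℝ) - b i x₀) 0 <
        max ((inner ℝ (a istar x₀) (z x₀) : ℝ) - b istar x₀) 0)
    -- (ii) strictly violated at `x₀`
    (hviol : 0 < (inner ℝ (a istar x₀) (z x₀) : ℝ) - b istar x₀)
    -- (iii) nonzero row at `x₀`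
    (hrow : a istar x₀ ≠ 0)
    -- `sel x` is any selection attaining the maximum violation over `S`
    (sel : EuclideanSpace ℝ (Fin m) → Fin p)
    (hsel_mem : ∀ x, sel x ∈ S)
    (hsel_max : ∀ x, ∀ i ∈ S,
      max ((inner ℝ (a i x) (z x) : ℝ) - b i x) 0 ≤
        max ((inner ℝ (a (sel x) x) (z x) : ℝ) - b (sel x) x) 0) :
    let F : EuclideanSpace ℝ (Fin m) → EuclideanSpace ℝ (Fin n) := fun x =>
      z x - (δ * max ((inner ℝ (a (sel x) x) (z x) : ℝ) - b (sel x) x) 0 /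
        ‖a (sel x) x‖ ^ 2) • a (sel x) x
    let G : EuclideanSpace ℝ (Fin m) → EuclideanSpace ℝ (Fin n) := fun x =>
      z x - (δ * ((inner ℝ (a istar x) (z x) : ℝ) - b istar x) /
        ‖a istar x‖ ^ 2) • a istar x
    DifferentiableAt ℝ F x₀ ∧ fderiv ℝ F x₀ = fderiv ℝ G x₀ := by
  intro F G
  have hres : ∀ i, DifferentiableAt ℝ (fun x => (inner ℝ (a i x) (z x) : ℝ) - b i x) x₀ :=
    fun i => ((ha i).inner ℝ hz).sub (hb i)
  have hsel : ∀ᶠ x in 𝓝 x₀, sel x = istar :=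
    eventually_selection_eq_of_unique_max
      (fun i _ => (hres i).continuousAt.max continuousAt_const) histar hstrict hsel_mem
      (fun x => hsel_max x istar histar)
  have hpos : ∀ᶠ x in 𝓝 x₀, 0 < (inner ℝ (a istar x) (z x) : ℝ) - b istar x :=
    (hres istar).continuousAt.eventually_const_lt hviol
  have hFG : F =ᶠ[𝓝 x₀] G := by
    filter_upwards [hsel, hpos] with x hx hx_pos
    simp only [F, G, hx, max_eq_left hx_pos.le]
  have hG : DifferentiableAt ℝ G x₀ := by
    have hnorm : ‖a istar x₀‖ ^ 2 ≠ 0 := pow_ne_zero 2 (norm_ne_zero_iff.2 hrow)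
    simp only [G, div_eq_mul_inv]
    exact hz.sub
      ((((hres istar).const_mul δ).mul (((ha istar).norm_sq ℝ).inv hnorm)).smul (ha istar))
  exact ⟨hG.congr_of_eventuallyEq hFG, hFG.fderiv_eq⟩

/-- Differentiability of one SKM step away from ties and kinks: if at `x₀` the
argmax constraint `i*` over the sample `S` is unique and strictly violated with
nonzero row, then the one-step SKM map (defined via any argmax selection
`sel`) is differentiable at `x₀` and its derivative equals that of the smooth
map using the fixed row `i*`. -/
theorem skm_one_step_differentiable_at
    (m p n : ℕ)
    -- `a i x` is the `i`-th row of the constraint matrix `A(x)`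
    (a : Fin p → EuclideanSpace ℝ (Fin m) → EuclideanSpace ℝ (Fin n))
    (b : Fin p → EuclideanSpace ℝ (Fin m) → ℝ)
    (x₀ : EuclideanSpace ℝ (Fin m))
    (ha : ∀ i, DifferentiableAt ℝ (a i) x₀)
    (hb : ∀ i, DifferentiableAt ℝ (b i) x₀)
    (S : Finset (Fin p))
    (z : EuclideanSpace ℝ (Fin m) → EuclideanSpace ℝ (Fin n))
    (hz : DifferentiableAt ℝ z x₀)
    (δ : ℝ) (hδ : 0 < δ)
    (istar : Fin p) (histar : istar ∈ S)
    -- (i) unique strict argmax at `x₀`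
    (hstrict : ∀ i ∈ S, i ≠ istar →
      max ((inner ℝ (a i x₀) (z x₀) : ℝ) - b i x₀) 0 <
        max ((inner ℝ (a istar x₀) (z x₀) : ℝ) - b istar x₀) 0)
    -- (ii) strictly violated at `x₀`
    (hviol : 0 < (inner ℝ (a istar x₀) (z x₀) : ℝ) - b istar x₀)
    -- (iii) nonzero row at `x₀`
    (hrow : a istar x₀ ≠ 0)
    -- `sel x` is any selection attaining the maximum violation over `S`
    (sel : EuclideanSpace ℝ (Fin m) → Fin p)
    (hsel_mem : ∀ x, sel x ∈ S)
    (hsel_max : ∀ x, ∀ i ∈ S,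
      max ((inner ℝ (a i x) (z x) : ℝ) - b i x) 0 ≤
        max ((inner ℝ (a (sel x) x) (z x) : ℝ) - b (sel x) x) 0) :
    let F : EuclideanSpace ℝ (Fin m) → EuclideanSpace ℝ (Fin n) := fun x =>
      z x - (δ * max ((inner ℝ (a (sel x) x) (z x) : ℝ) - b (sel x) x) 0 /
        ‖a (sel x) x‖ ^ 2) • a (sel x) x
    let G : EuclideanSpace ℝ (Fin m) → EuclideanSpace ℝ (Fin n) := fun x =>
      z x - (δ * ((inner ℝ (a istar x) (z x) : ℝ) - b istar x) /
        ‖a istar x‖ ^ 2) • a istar x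
    DifferentiableAt ℝ F x₀ ∧ fderiv ℝ F x₀ = fderiv ℝ G x₀ :=
  skm_one_step_differentiable_at_general m p n a b x₀ ha hb S z hz δ istar histar hstrict hviol hrow
    sel hsel_mem hsel_max
end
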